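/- arXiv:2605.24434 — 14 statements merged into one kernel-verified Lean document; each statement's English description precedes it below -/
import Mathlib

section
/- Fix an integer N ≥ 1 and c₁, …, c_N ∈ ℂ with c_j ≠ 1 for each j, and let R(z,w) = (w − z²)^{2N+1} / ∏_{j=1}^N (w − c_j z²)². Fix μ ∈ ℂ, μ ≠ 0, and for τ ∈ ℂ set z(τ) = i·μ·τ·∏_{j=1}^N ((1 − c_j)τ² − 1) and w(τ) = −μ²·(τ² − 1)·∏_{j=1}^N ((1 − c_j)τ² − 1)². Then for every τ ∈ ℂ such that τ ≠ 0 and (1 − c_j)τ² − 1 ≠ 0 for all j, one has z(τ)² − w(τ) = (z(τ)/τ)² and R(z(τ), w(τ)) = μ². (Thus τ ↦ (z(τ), w(τ)) parametrizes the level curve {R = μ²}, and these level curves are rational.) -/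
/-!
Put `P = ∏ⱼ ((1 - cⱼ)τ² - 1)`. The parametrization gives `z² = -μ²τ²P²` and `w = -μ²(τ² - 1)P²`,
hence `w - z² = μ²P²` and `w - cⱼz² = -μ²P²·((1 - cⱼ)τ² - 1)`. Squaring and multiplying over `j`
turns the denominator of `R` into `(μ²P²)^{2N}·P²`, so `R = (μ²P²)^{2N+1} / ((μ²P²)^{2N}·P²) = μ²`.
-/

open Finset

theorem pow_succ_div_pow_mul {K : Type*} [Field K] (a b : K) (n : ℕ) :
    a ^ (n + 1) / (a ^ n * b) = a / b := by
  rcases eq_or_ne a 0 with rfl | ha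
  · simp
  · rw [pow_succ, mul_div_mul_left _ _ (pow_ne_zero n ha)]

namespace DualBilliardA1

section Field

variable {K : Type*} [Field K] {m s z2 w P : K}

theorem sub_eq_div (hz2 : z2 = -m * s * P ^ 2) (hw : w = -m * (s - 1) * P ^ 2) (hs : s ≠ 0) :
    z2 - w = z2 / s := by
  rw [hz2, hw]
  field_simp
  ring

theorem sub_eq_mul_sq (hz2 : z2 = -m * s * P ^ 2) (hw : w = -m * (s - 1) * P ^ 2) :
    w - z2 = m * P ^ 2 := by
  rw [hz2, hw]
  ring

theorem sub_mul_eq (hz2 : z2 = -m * s * P ^ 2) (hw : w = -m * (s - 1) * P ^ 2) (c : K) :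
    w - c * z2 = -(m * P ^ 2) * ((1 - c) * s - 1) := by
  rw [hz2, hw]
  ring

variable {ι : Type*} [Fintype ι] (c : ι → K)

theorem prod_sub_mul_sq (hP : P = ∏ j, ((1 - c j) * s - 1))
    (hz2 : z2 = -m * s * P ^ 2) (hw : w = -m * (s - 1) * P ^ 2) :
    ∏ j, (w - c j * z2) ^ 2 = (m * P ^ 2) ^ (2 * Fintype.card ι) * P ^ 2 := by
  simp_rw [sub_mul_eq hz2 hw, mul_pow _ ((1 - _) * s - 1), prod_mul_distrib, prod_const, neg_sq,
    ← pow_mul, prod_pow, ← hP, card_univ]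

theorem level_eq (hP : P = ∏ j, ((1 - c j) * s - 1)) (hP0 : P ≠ 0)
    (hz2 : z2 = -m * s * P ^ 2) (hw : w = -m * (s - 1) * P ^ 2) :
    (w - z2) ^ (2 * Fintype.card ι + 1) / ∏ j, (w - c j * z2) ^ 2 = m := by
  rw [prod_sub_mul_sq c hP hz2 hw, sub_eq_mul_sq hz2 hw, pow_succ_div_pow_mul,
    mul_div_cancel_right₀ _ (pow_ne_zero 2 hP0)]

end Field

end DualBilliardA1

open DualBilliardA1 in
theorem stmt_0_general (N : ℕ) (c : Fin N → ℂ)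
    (μ : ℂ)
    (z w : ℂ → ℂ)
    (hz : ∀ τ : ℂ, z τ = Complex.I * μ * τ * ∏ j, ((1 - c j) * τ ^ 2 - 1))
    (hw : ∀ τ : ℂ, w τ = -μ ^ 2 * (τ ^ 2 - 1) * ∏ j, ((1 - c j) * τ ^ 2 - 1) ^ 2)
    (τ : ℂ) (hτ : τ ≠ 0) (hfac : ∀ j, (1 - c j) * τ ^ 2 - 1 ≠ 0) :
    z τ ^ 2 - w τ = (z τ / τ) ^ 2 ∧
    (w τ - z τ ^ 2) ^ (2 * N + 1) / ∏ j, (w τ - c j * z τ ^ 2) ^ 2 = μ ^ 2 := by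
  set P := ∏ j, ((1 - c j) * τ ^ 2 - 1) with hP
  have hz2 : z τ ^ 2 = -μ ^ 2 * τ ^ 2 * P ^ 2 := by
    rw [hz, mul_pow, mul_pow, mul_pow, Complex.I_sq]
    ring
  have hwτ : w τ = -μ ^ 2 * (τ ^ 2 - 1) * P ^ 2 := by
    rw [hw, prod_pow]
  refine ⟨by rw [div_pow, sub_eq_div hz2 hwτ (pow_ne_zero 2 hτ)], ?_⟩
  simpa using level_eq c hP (prod_ne_zero_iff.mpr fun j _ => hfac j) hz2 hwτ

/-- Type a1 dual billiards: rational parametrization of the level curves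
`{R = μ²}` of `R(z,w) = (w − z²)^{2N+1} / ∏_{j=1}^N (w − c_j z²)²`. -/
theorem stmt_0 (N : ℕ) (hN : 1 ≤ N) (c : Fin N → ℂ) (hc : ∀ j, c j ≠ 1)
    (μ : ℂ) (hμ : μ ≠ 0)
    (z w : ℂ → ℂ)
    (hz : ∀ τ : ℂ, z τ = Complex.I * μ * τ * ∏ j, ((1 - c j) * τ ^ 2 - 1))
    (hw : ∀ τ : ℂ, w τ = -μ ^ 2 * (τ ^ 2 - 1) * ∏ j, ((1 - c j) * τ ^ 2 - 1) ^ 2)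
    (τ : ℂ) (hτ : τ ≠ 0) (hfac : ∀ j, (1 - c j) * τ ^ 2 - 1 ≠ 0) :
    z τ ^ 2 - w τ = (z τ / τ) ^ 2 ∧
    (w τ - z τ ^ 2) ^ (2 * N + 1) / ∏ j, (w τ - c j * z τ ^ 2) ^ 2 = μ ^ 2 :=
  stmt_0_general N c μ z w hz hw τ hτ hfac
end

section
/- Fix an integer N ≥ 1, c₁, …, c_N ∈ ℂ with c_j ≠ 1, and μ ∈ ℂ, μ ≠ 0. For τ ∈ ℂ set z(τ) = i·μ·τ·∏_{j=1}^N ((1 − c_j)τ² − 1), w(τ) = −μ²(τ² − 1)·∏_{j=1}^N ((1 − c_j)τ² − 1)², and for each choice of sign set z₀±(τ) = ((τ ± 1)/τ)·z(τ). Then for every τ ∈ ℂ with τ ≠ 0 one has w(τ) = 2·z(τ)·z₀±(τ) − z₀±(τ)²; that is, the point (z(τ), w(τ)) lies on the line tangent to the parabola {w = z²} at the point (z₀±(τ), z₀±(τ)²). -/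
/-! The tangent to `w = z²` at abscissa `z₀` passes through `(z, w)` iff `z² - w = (z - z₀)²`.
For `z₀ = (1 ± 1/τ) z` this reads `τ² w = (τ² - 1) z²`, which holds because, with
`P = ∏ ((1 - c_j) τ² - 1)`, both sides equal `-μ² τ² (τ² - 1) P²`. -/

theorem sq_mul_two_mul_mul_sub_sq_of_eq_div_mul {K : Type*} [Field K] {τ ε z z₀ : K}
    (hτ : τ ≠ 0) (hε : ε ^ 2 = 1) (hz₀ : z₀ = (τ + ε) / τ * z) :
    τ ^ 2 * (2 * z * z₀ - z₀ ^ 2) = (τ ^ 2 - 1) * z ^ 2 := by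
  subst hz₀
  field_simp
  linear_combination -z ^ 2 * hε

theorem stmt_1_general (N : ℕ) (c : Fin N → ℂ)
    (μ : ℂ)
    (z w : ℂ → ℂ)
    (hz : ∀ τ : ℂ, z τ = Complex.I * μ * τ * ∏ j, ((1 - c j) * τ ^ 2 - 1))
    (hw : ∀ τ : ℂ, w τ = -μ ^ 2 * (τ ^ 2 - 1) * ∏ j, ((1 - c j) * τ ^ 2 - 1) ^ 2)
    (τ : ℂ) (hτ : τ ≠ 0)
    (ε : ℂ) (hε : ε = 1 ∨ ε = -1)
    (z₀ : ℂ) (hz₀ : z₀ = ((τ + ε) / τ) * z τ) :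
    w τ = 2 * z τ * z₀ - z₀ ^ 2 := by
  have hε_sq : ε ^ 2 = 1 := by rcases hε with rfl | rfl <;> norm_num
  refine mul_left_cancel₀ (pow_ne_zero 2 hτ) ?_
  rw [sq_mul_two_mul_mul_sub_sq_of_eq_div_mul hτ hε_sq hz₀, hz, hw, Finset.prod_pow]
  linear_combination -(τ ^ 2 - 1) * μ ^ 2 * τ ^ 2 * (∏ j, ((1 - c j) * τ ^ 2 - 1)) ^ 2 *
    Complex.I_sq

/-- Type a1 dual billiards: the point `(z(τ), w(τ))` of the level curve lies on the
tangent line to the parabola `{w = z²}` at the point with abscissa `z₀± = ((τ ± 1)/τ)·z(τ)`. -/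
theorem stmt_1 (N : ℕ) (hN : 1 ≤ N) (c : Fin N → ℂ) (hc : ∀ j, c j ≠ 1)
    (μ : ℂ) (hμ : μ ≠ 0)
    (z w : ℂ → ℂ)
    (hz : ∀ τ : ℂ, z τ = Complex.I * μ * τ * ∏ j, ((1 - c j) * τ ^ 2 - 1))
    (hw : ∀ τ : ℂ, w τ = -μ ^ 2 * (τ ^ 2 - 1) * ∏ j, ((1 - c j) * τ ^ 2 - 1) ^ 2)
    (τ : ℂ) (hτ : τ ≠ 0)
    (ε : ℂ) (hε : ε = 1 ∨ ε = -1)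
    (z₀ : ℂ) (hz₀ : z₀ = ((τ + ε) / τ) * z τ) :
    w τ = 2 * z τ * z₀ - z₀ ^ 2 :=
  stmt_1_general N c μ z w hz hw τ hτ ε hε z₀ hz₀
end

section
/- Fix an integer N ≥ 1 and set c_j = −4j(2N+1−j)/(2N+1−2j)² for j = 1, …, N, ρ = 2 − 2/(2N+1), and η(ζ) = ((ρ−1)ζ − (ρ−2)) / (ρζ − (ρ−1)). Fix μ ∈ ℂ, μ ≠ 0, and define z(τ) = i·μ·τ·∏_{j=1}^N ((1 − c_j)τ² − 1), w(τ) = −μ²(τ² − 1)·∏_{j=1}^N ((1 − c_j)τ² − 1)². For τ ∈ ℂ set z₀ = ((τ+1)/τ)·z(τ), ζ = τ/(τ+1), ζ* = η(ζ), z* = z₀·ζ*, w* = 2·z*·z₀ − z₀². Then, for every τ such that τ ≠ 0, τ ≠ −1 and the denominator ρζ − (ρ−1) is nonzero, one has z* = z(τ + 2/(2N+1)) and w* = w(τ + 2/(2N+1)). (Thus in the coordinate τ the dual billiard map of type a1 acts on each invariant curve as the translation τ ↦ τ + 2/(2N+1).) -/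
/-!
Write `n = 2N + 1` and `p_j = n - 2(j + 1)`, so that the `p_j` are the odd numbers `1, 3, …, 2N - 1`.
Since `1 - c_j = n² / p_j²`, the product `P(τ) = ∏_j ((1 - c_j) τ² - 1)` is a constant multiple of
`∏_j ((nτ)² - p_j²)`, the product of `nτ - k` over the odd `k` with `|k| < n`. Appending the factor
`nτ + n` on the left, or `nτ + 2 - n` after the shift `nτ ↦ nτ + 2`, gives the same product, so
`(τ + 1) P(τ) = (τ' - 1) P(τ')` with `τ' = τ + 2/n`. In the coordinate `τ` the involution reads
`ζ* = τ' / (τ' - 1)`, and `z₀ = iμ(τ + 1)P(τ) = iμ(τ' - 1)P(τ')` then gives `z* = iμ τ' P(τ') = z(τ')`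
and `w* = (iμ P(τ'))² (2τ'(τ' - 1) - (τ' - 1)²) = w(τ')`.
-/

theorem add_mul_prod_sq_sub_odd_sq_shift {R : Type*} [CommRing R] (N : ℕ) (x : R) :
    (x + (2 * N + 1)) * ∏ j : Fin N, (x ^ 2 - (2 * N - 1 - 2 * (j : R)) ^ 2) =
      (x + 1 - 2 * N) * ∏ j : Fin N, ((x + 2) ^ 2 - (2 * N - 1 - 2 * (j : R)) ^ 2) := by
  induction N with
  | zero => simp only [Finset.univ_eq_empty, Finset.prod_empty]; push_cast; ring
  | succ N ih =>
    have hodd : ∀ j : Fin N, 2 * ((N : R) + 1) - 1 - 2 * ((j : R) + 1) = 2 * N - 1 - 2 * j :=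
      fun j => by ring
    simp only [Fin.prod_univ_succ, Fin.val_zero, Fin.val_succ]
    push_cast
    simp only [hodd]
    linear_combination ((x + 2 * N + 3) * (x - 2 * N - 1)) * ih

section A1

variable {K : Type*} [Field K]

/-- The coefficient `c_j` of the paper is `a1Coeff (2N + 1) (j + 1)`. -/
def a1Coeff (n k : K) : K :=
  -(4 * k * (n - k)) / (n - 2 * k) ^ 2

theorem one_sub_a1Coeff {n k : K} (h : n - 2 * k ≠ 0) :
    1 - a1Coeff n k = n ^ 2 / (n - 2 * k) ^ 2 := by
  rw [a1Coeff, eq_div_iff (pow_ne_zero 2 h), sub_mul, div_mul_cancel₀ _ (pow_ne_zero 2 h)]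
  ring

theorem a1_involution_denom_eq {n τ : K} (hn : n ≠ 0) (hτ : τ + 1 ≠ 0) :
    (2 - 2 / n) * (τ / (τ + 1)) - (2 - 2 / n - 1) = (τ + 2 / n - 1) / (τ + 1) := by
  field_simp
  ring

theorem a1_involution_numer_eq {n τ : K} (hn : n ≠ 0) (hτ : τ + 1 ≠ 0) :
    (2 - 2 / n - 1) * (τ / (τ + 1)) - (2 - 2 / n - 2) = (τ + 2 / n) / (τ + 1) := by
  field_simp
  ring

def a1Profile (N : ℕ) (τ : K) : K :=
  ∏ j : Fin N, ((1 - a1Coeff (2 * (N : K) + 1) ((j : ℕ) + 1)) * τ ^ 2 - 1)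

variable [CharZero K]

theorem two_mul_add_one_ne_zero (N : ℕ) : 2 * (N : K) + 1 ≠ 0 := by
  exact_mod_cast Nat.succ_ne_zero (2 * N)

theorem two_mul_sub_one_sub_two_mul_ne_zero {N : ℕ} (j : Fin N) :
    2 * (N : K) - 1 - 2 * (j : K) ≠ 0 := by
  have hj : (j : ℕ) + 1 ≤ N := j.2
  have hcast : 2 * (N : K) - 1 - 2 * (j : K) = ((2 * (N - ((j : ℕ) + 1)) + 1 : ℕ) : K) := by
    push_cast [Nat.cast_sub hj]
    ring
  rw [hcast]
  exact Nat.cast_ne_zero.mpr (Nat.succ_ne_zero _)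

theorem a1Profile_mul_prod_sq (N : ℕ) (τ : K) :
    a1Profile N τ * ∏ j : Fin N, (2 * (N : K) - 1 - 2 * (j : K)) ^ 2 =
      ∏ j : Fin N, (((2 * N + 1) * τ) ^ 2 - (2 * (N : K) - 1 - 2 * (j : K)) ^ 2) := by
  rw [a1Profile, ← Finset.prod_mul_distrib]
  refine Finset.prod_congr rfl fun j _ => ?_
  have hodd : 2 * (N : K) + 1 - 2 * ((j : ℕ) + 1) = 2 * N - 1 - 2 * (j : K) := by ring
  have hp := two_mul_sub_one_sub_two_mul_ne_zero (K := K) j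
  rw [one_sub_a1Coeff (hodd ▸ hp), hodd]
  field_simp

theorem a1Profile_shift (N : ℕ) (τ : K) :
    (τ + 1) * a1Profile N τ =
      (τ + 2 / (2 * N + 1) - 1) * a1Profile N (τ + 2 / (2 * N + 1)) := by
  have hn := two_mul_add_one_ne_zero (K := K) N
  have hp : ∏ j : Fin N, (2 * (N : K) - 1 - 2 * (j : K)) ^ 2 ≠ 0 :=
    Finset.prod_ne_zero_iff.mpr fun j _ =>
      pow_ne_zero _ (two_mul_sub_one_sub_two_mul_ne_zero j)
  set τ' := τ + 2 / (2 * N + 1)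
  have hshift : (2 * (N : K) + 1) * τ + 2 = (2 * N + 1) * τ' := by
    simp only [τ']
    field_simp
  have key := add_mul_prod_sq_sub_odd_sq_shift N ((2 * N + 1) * τ)
  rw [← a1Profile_mul_prod_sq, hshift, ← a1Profile_mul_prod_sq] at key
  apply mul_left_cancel₀ (mul_ne_zero hn hp)
  linear_combination
    key + a1Profile N τ' * (∏ j : Fin N, (2 * (N : K) - 1 - 2 * (j : K)) ^ 2) * hshift

end A1

theorem stmt_2_general (N : ℕ)
    (c : Fin N → ℂ)
    (hc : ∀ j : Fin N, c j =
      -(4 * (((j : ℕ) : ℂ) + 1) * (2 * (N : ℂ) + 1 - (((j : ℕ) : ℂ) + 1))) /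
        (2 * (N : ℂ) + 1 - 2 * (((j : ℕ) : ℂ) + 1)) ^ 2)
    (ρ : ℂ) (hρ : ρ = 2 - 2 / (2 * (N : ℂ) + 1))
    (η : ℂ → ℂ) (hη : ∀ ζ : ℂ, η ζ = ((ρ - 1) * ζ - (ρ - 2)) / (ρ * ζ - (ρ - 1)))
    (μ : ℂ)
    (z w : ℂ → ℂ)
    (hz : ∀ τ : ℂ, z τ = Complex.I * μ * τ * ∏ j, ((1 - c j) * τ ^ 2 - 1))
    (hw : ∀ τ : ℂ, w τ = -μ ^ 2 * (τ ^ 2 - 1) * ∏ j, ((1 - c j) * τ ^ 2 - 1) ^ 2)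
    (τ : ℂ) (hτ0 : τ ≠ 0) (hτ1 : τ ≠ -1)
    (z₀ ζ ζs zs ws : ℂ)
    (hz₀ : z₀ = ((τ + 1) / τ) * z τ)
    (hζ : ζ = τ / (τ + 1))
    (hden : ρ * ζ - (ρ - 1) ≠ 0)
    (hζs : ζs = η ζ)
    (hzs : zs = z₀ * ζs)
    (hws : ws = 2 * zs * z₀ - z₀ ^ 2) :
    zs = z (τ + 2 / (2 * (N : ℂ) + 1)) ∧ ws = w (τ + 2 / (2 * (N : ℂ) + 1)) := by
  have hP (s : ℂ) : ∏ j, ((1 - c j) * s ^ 2 - 1) = a1Profile N s := by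
    simp only [a1Profile, a1Coeff, hc]
  simp only [Finset.prod_pow, hP] at hz hw
  have hn := two_mul_add_one_ne_zero (K := ℂ) N
  have hτ1₀ : τ + 1 ≠ 0 := fun h => hτ1 (eq_neg_of_add_eq_zero_left h)
  set τ' := τ + 2 / (2 * (N : ℂ) + 1)
  have hdenτ : ρ * ζ - (ρ - 1) = (τ' - 1) / (τ + 1) := by
    rw [hρ, hζ, a1_involution_denom_eq hn hτ1₀]
  have hτ' : τ' - 1 ≠ 0 := fun h => hden (by rw [hdenτ, h, zero_div])
  have hζs' : ζs = τ' / (τ' - 1) := by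
    rw [hζs, hη, hdenτ, hρ, hζ, a1_involution_numer_eq hn hτ1₀, div_div_div_cancel_right₀ hτ1₀]
  have hz₀' : z₀ = Complex.I * μ * ((τ' - 1) * a1Profile N τ') := by
    rw [hz₀, hz, ← a1Profile_shift]
    field_simp
  constructor
  · rw [hzs, hz₀', hζs', hz]
    field_simp
  · rw [hws, hzs, hz₀', hζs', hw]
    field_simp
    linear_combination (μ ^ 2 * a1Profile N τ' ^ 2 * (τ' ^ 2 - 1)) * Complex.I_sq

/-- Type a1 dual billiards: in the coordinate `τ` on an invariant curve, the dual billiard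
map acts as the translation `τ ↦ τ + 2/(2N+1)`. -/
theorem stmt_2 (N : ℕ) (hN : 1 ≤ N)
    (c : Fin N → ℂ)
    (hc : ∀ j : Fin N, c j =
      -(4 * (((j : ℕ) : ℂ) + 1) * (2 * (N : ℂ) + 1 - (((j : ℕ) : ℂ) + 1))) /
        (2 * (N : ℂ) + 1 - 2 * (((j : ℕ) : ℂ) + 1)) ^ 2)
    (ρ : ℂ) (hρ : ρ = 2 - 2 / (2 * (N : ℂ) + 1))
    (η : ℂ → ℂ) (hη : ∀ ζ : ℂ, η ζ = ((ρ - 1) * ζ - (ρ - 2)) / (ρ * ζ - (ρ - 1)))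
    (μ : ℂ) (hμ : μ ≠ 0)
    (z w : ℂ → ℂ)
    (hz : ∀ τ : ℂ, z τ = Complex.I * μ * τ * ∏ j, ((1 - c j) * τ ^ 2 - 1))
    (hw : ∀ τ : ℂ, w τ = -μ ^ 2 * (τ ^ 2 - 1) * ∏ j, ((1 - c j) * τ ^ 2 - 1) ^ 2)
    (τ : ℂ) (hτ0 : τ ≠ 0) (hτ1 : τ ≠ -1)
    (z₀ ζ ζs zs ws : ℂ)
    (hz₀ : z₀ = ((τ + 1) / τ) * z τ)
    (hζ : ζ = τ / (τ + 1))
    (hden : ρ * ζ - (ρ - 1) ≠ 0)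
    (hζs : ζs = η ζ)
    (hzs : zs = z₀ * ζs)
    (hws : ws = 2 * zs * z₀ - z₀ ^ 2) :
    zs = z (τ + 2 / (2 * (N : ℂ) + 1)) ∧ ws = w (τ + 2 / (2 * (N : ℂ) + 1)) :=
  stmt_2_general N c hc ρ hρ η hη μ z w hz hw τ hτ0 hτ1 z₀ ζ ζs zs ws hz₀ hζ hden hζs hzs hws
end

section
/- Fix an integer N ≥ 1, c₁, …, c_N ∈ ℂ with c_j ≠ 1, and let R(z,w) = (w − z²)^{N+1} / (z·∏_{j=1}^N (w − c_j z²)). Fix λ ∈ ℂ, λ ≠ 0, and for s ∈ ℂ set z(s) = −λ·s·∏_{j=1}^N (1 + (c_j − 1)s) and w(s) = λ²·s·(s − 1)·∏_{j=1}^N (1 + (c_j − 1)s)². Then for every s ∈ ℂ with s ≠ 0 and 1 + (c_j − 1)s ≠ 0 for all j, one has z(s)² − w(s) = z(s)²/s and R(z(s), w(s)) = λ. (Thus s ↦ (z(s), w(s)) parametrizes the level curve {R = λ}, and these level curves are rational.) -/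
/-!
On the parametrized curve, with `P = ∏ⱼ (1 + (cⱼ - 1) s)`, one has `z = -λ s P` and
`w = λ² s (s - 1) P²`, so every factor `w - c z²` equals `-(λ² s P²) · (1 + (c - 1) s)`.
Taking `c = 1` gives `w - z² = -(λ² s P²)`, and in `R` the `N + 1` copies of `-(λ² s P²)`
cancel against `N` of them together with `z · P = -λ s P²`, leaving `λ`.
-/

section CommRing

variable {K : Type*} [CommRing K]

theorem a2_curve_factor (lam s P c : K) :
    lam ^ 2 * s * (s - 1) * P ^ 2 - c * (-lam * s * P) ^ 2 =
      -(lam ^ 2 * s * P ^ 2) * (1 + (c - 1) * s) := by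
  ring

theorem a2_curve_sub_sq (lam s P : K) :
    lam ^ 2 * s * (s - 1) * P ^ 2 - (-lam * s * P) ^ 2 = -(lam ^ 2 * s * P ^ 2) := by
  ring

theorem prod_a2_curve_factor {ι : Type*} [Fintype ι] (c : ι → K) (lam s P : K)
    (hP : ∏ j, (1 + (c j - 1) * s) = P) :
    ∏ j, (lam ^ 2 * s * (s - 1) * P ^ 2 - c j * (-lam * s * P) ^ 2) =
      (-(lam ^ 2 * s * P ^ 2)) ^ Fintype.card ι * P := by
  simp only [a2_curve_factor, Finset.prod_mul_distrib, Finset.prod_const, Finset.card_univ, hP]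

end CommRing

section Field

variable {K : Type*} [Field K]

theorem a2_curve_sq_sub {s : K} (hs : s ≠ 0) (lam P : K) :
    (-lam * s * P) ^ 2 - lam ^ 2 * s * (s - 1) * P ^ 2 = (-lam * s * P) ^ 2 / s := by
  field_simp
  ring

theorem a2_curve_level {lam s P : K} (hlam : lam ≠ 0) (hs : s ≠ 0) (hP : P ≠ 0) (n : ℕ) :
    (-(lam ^ 2 * s * P ^ 2)) ^ (n + 1) / (-lam * s * P * ((-(lam ^ 2 * s * P ^ 2)) ^ n * P)) =
      lam := by
  have hq : -(lam ^ 2 * s * P ^ 2) ≠ 0 := by simp [hlam, hs, hP]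
  field_simp
  ring

end Field

theorem stmt_3_general (N : ℕ) (c : Fin N → ℂ)
    (lam : ℂ) (hlam : lam ≠ 0)
    (z w : ℂ → ℂ)
    (hz : ∀ s : ℂ, z s = -lam * s * ∏ j, (1 + (c j - 1) * s))
    (hw : ∀ s : ℂ, w s = lam ^ 2 * s * (s - 1) * ∏ j, (1 + (c j - 1) * s) ^ 2)
    (s : ℂ) (hs : s ≠ 0) (hfac : ∀ j, 1 + (c j - 1) * s ≠ 0) :
    z s ^ 2 - w s = z s ^ 2 / s ∧
    (w s - z s ^ 2) ^ (N + 1) / (z s * ∏ j, (w s - c j * z s ^ 2)) = lam := by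
  obtain ⟨P, hP⟩ : ∃ P, ∏ j, (1 + (c j - 1) * s) = P := ⟨_, rfl⟩
  have hP0 : P ≠ 0 := hP ▸ Finset.prod_ne_zero_iff.mpr fun j _ => hfac j
  rw [hw, Finset.prod_pow, hz, hP]
  refine ⟨a2_curve_sq_sub hs lam P, ?_⟩
  rw [a2_curve_sub_sq, prod_a2_curve_factor c lam s P hP, Fintype.card_fin]
  exact a2_curve_level hlam hs hP0 N

/-- Type a2 dual billiards: rational parametrization of the level curves
`{R = λ}` of `R(z,w) = (w − z²)^{N+1} / (z·∏_{j=1}^N (w − c_j z²))`. -/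
theorem stmt_3 (N : ℕ) (hN : 1 ≤ N) (c : Fin N → ℂ) (hc : ∀ j, c j ≠ 1)
    (lam : ℂ) (hlam : lam ≠ 0)
    (z w : ℂ → ℂ)
    (hz : ∀ s : ℂ, z s = -lam * s * ∏ j, (1 + (c j - 1) * s))
    (hw : ∀ s : ℂ, w s = lam ^ 2 * s * (s - 1) * ∏ j, (1 + (c j - 1) * s) ^ 2)
    (s : ℂ) (hs : s ≠ 0) (hfac : ∀ j, 1 + (c j - 1) * s ≠ 0) :
    z s ^ 2 - w s = z s ^ 2 / s ∧
    (w s - z s ^ 2) ^ (N + 1) / (z s * ∏ j, (w s - c j * z s ^ 2)) = lam :=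
  stmt_3_general N c lam hlam z w hz hw s hs hfac
end

section
/- Fix an integer N ≥ 1 and set c_j = −j(2N+2−j)/(N+1−j)² for j = 1, …, N, ρ = 2 − 1/(N+1), and η(ζ) = ((ρ−1)ζ − (ρ−2))/(ρζ − (ρ−1)). Fix λ ∈ ℂ, λ ≠ 0, and define z(s) = −λ·s·∏_{j=1}^N (1 + (c_j − 1)s), w(s) = λ²·s·(s−1)·∏_{j=1}^N (1 + (c_j − 1)s)². For τ ∈ ℂ set z₀ = ((τ+1)/τ)·z(τ²), ζ = τ/(τ+1), ζ* = η(ζ), z* = z₀·ζ*, w* = 2·z*·z₀ − z₀². Then, for every τ with τ ≠ 0, τ ≠ −1 and ρζ − (ρ−1) ≠ 0, one has z* = z((τ + 1/(N+1))²) and w* = w((τ + 1/(N+1))²). (Thus in the coordinate τ the dual billiard map of type a2 acts on each invariant curve as the translation τ ↦ τ + 1/(N+1).) -/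
/-!
With `M = N + 1` one has `c_j - 1 = -(M / (M - j))²`, so `Q(σ²) = ∏ⱼ (1 + (c_j - 1) σ²)` equals
`∏_{k=1}^N (1 - (Mσ/k)²)`, a truncated sine product in `t = Mσ`; shifting `t ↦ t + 1` telescopes
it, which gives `σ (σ + 1) Q(σ²) = σ' (σ' - 1) Q(σ'²)` for `σ' = σ + 1/M`. Now
`z₀ = -λ τ (τ + 1) Q(τ²)`, the Möbius map `η` sends `τ / (τ + 1)` to `τ' / (τ' - 1)`, and the
identity reads `z₀ = -λ τ' (τ' - 1) Q(τ'²)`: the tangency point seen from the parameter `-τ'` is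
again `z₀`. Hence `z* = z₀ τ' / (τ' - 1) = z(τ'²)`, and `w(σ²) = 2 z(σ²) ẑ - ẑ²` with
`ẑ = -λ σ (σ + 1) Q(σ²)`, taken at `σ = -τ'`, puts `(z*, w*)` on the curve.
-/

open Finset

section

variable {R : Type*} [CommRing R]

def sqDiffProd (n : ℕ) (t : R) : R := ∏ k ∈ range n, (((k : R) + 1) ^ 2 - t ^ 2)

theorem sqDiffProd_add_one_mul (n : ℕ) (t : R) :
    sqDiffProd n (t + 1) * ((n - t) * (1 + t)) = sqDiffProd n t * (-t * (n + 1 + t)) := by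
  induction n with
  | zero => simp [sqDiffProd]
  | succ n ih =>
    simp only [sqDiffProd, prod_range_succ, Nat.cast_add_one] at ih ⊢
    linear_combination (n + 2 + t) * (n + 1 - t) * ih

theorem prod_fin_natCast_sub {M : Type*} [CommMonoid M] (N : ℕ) (f : R → M) :
    ∏ j : Fin N, f ((N : R) - (j : ℕ)) = ∏ k ∈ range N, f ((k : R) + 1) := by
  rw [Fin.prod_univ_eq_prod_range (fun j => f ((N : R) - j)), ← prod_range_reflect]
  refine prod_congr rfl fun k hk => ?_
  rw [mem_range] at hk
  rw [Nat.cast_sub (by omega), Nat.cast_sub (by omega)]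
  push_cast
  ring_nf

end

section

variable {K : Type*} [Field K]

theorem mul_div_add_one_sub (α β τ : K) (hτ : τ + 1 ≠ 0) :
    α * (τ / (τ + 1)) - β = ((α - β) * τ - β) / (τ + 1) := by
  field_simp
  ring

variable [CharZero K]

-- `j : Fin N` stands for the paper's index `j + 1 ∈ {1, …, N}`.
def a2Coeff (N : ℕ) (j : Fin N) : K :=
  -((((j : ℕ) : K) + 1) * (2 * (N : K) + 2 - (((j : ℕ) : K) + 1))) /
    ((N : K) + 1 - (((j : ℕ) : K) + 1)) ^ 2

def a2Prod (N : ℕ) (s : K) : K := ∏ j, (1 + (a2Coeff N j - 1) * s)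

theorem sq_mul_one_add_a2Coeff_sub_one_mul (N : ℕ) (j : Fin N) (s : K) :
    ((N : K) - (j : ℕ)) ^ 2 * (1 + (a2Coeff N j - 1) * s) =
      ((N : K) - (j : ℕ)) ^ 2 - ((N : K) + 1) ^ 2 * s := by
  have hj : (N : K) - (j : ℕ) ≠ 0 := sub_ne_zero.2 (Nat.cast_injective.ne j.isLt.ne')
  simp only [a2Coeff, add_sub_add_right_eq_sub]
  field_simp
  ring

theorem sqDiffProd_zero_mul_a2Prod (N : ℕ) (σ : K) :
    sqDiffProd N (0 : K) * a2Prod N (σ ^ 2) = sqDiffProd N (((N : K) + 1) * σ) := by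
  simp only [sqDiffProd, a2Prod]
  rw [← prod_fin_natCast_sub N (fun x => x ^ 2 - 0 ^ 2),
    ← prod_fin_natCast_sub N (fun x => x ^ 2 - (((N : K) + 1) * σ) ^ 2), ← prod_mul_distrib]
  refine prod_congr rfl fun j _ => ?_
  linear_combination sq_mul_one_add_a2Coeff_sub_one_mul N j (σ ^ 2)

theorem sqDiffProd_zero_ne_zero (n : ℕ) : sqDiffProd n (0 : K) ≠ 0 :=
  prod_ne_zero_iff.2 fun k _ => by simpa using Nat.cast_add_one_ne_zero k

theorem a2Prod_shift (N : ℕ) (σ : K) :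
    σ * (σ + 1) * a2Prod N (σ ^ 2) =
      (σ + 1 / (N + 1)) * (σ + 1 / (N + 1) - 1) * a2Prod N ((σ + 1 / (N + 1)) ^ 2) := by
  have hM : (N : K) + 1 ≠ 0 := Nat.cast_add_one_ne_zero N
  have hσ' : ((N : K) + 1) * (σ + 1 / (N + 1)) = ((N : K) + 1) * σ + 1 := by field_simp
  generalize σ + 1 / ((N : K) + 1) = σ' at hσ' ⊢
  have e := sqDiffProd_zero_mul_a2Prod N σ
  have e' := sqDiffProd_zero_mul_a2Prod N σ'
  have hs := sqDiffProd_add_one_mul N (((N : K) + 1) * σ)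
  rw [← hσ'] at hs
  -- after clearing the factor `sqDiffProd N 0 * (N + 1)²` this is `hs`, with `t = (N + 1) σ`
  apply mul_left_cancel₀ (mul_ne_zero (sqDiffProd_zero_ne_zero N) (pow_ne_zero 2 hM))
  linear_combination (((N : K) + 1) ^ 2 * σ * (σ + 1)) * e
    - (((N : K) + 1) ^ 2 * σ' * (σ' - 1)) * e' + hs
    - (((N : K) + 1) * (σ' + σ - 1) + 1) * sqDiffProd N (((N : K) + 1) * σ') * hσ'

end

theorem stmt_5_general (N : ℕ)
    (c : Fin N → ℂ)
    (hc : ∀ j : Fin N, c j =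
      -((((j : ℕ) : ℂ) + 1) * (2 * (N : ℂ) + 2 - (((j : ℕ) : ℂ) + 1))) /
        ((N : ℂ) + 1 - (((j : ℕ) : ℂ) + 1)) ^ 2)
    (ρ : ℂ) (hρ : ρ = 2 - 1 / ((N : ℂ) + 1))
    (η : ℂ → ℂ) (hη : ∀ ζ : ℂ, η ζ = ((ρ - 1) * ζ - (ρ - 2)) / (ρ * ζ - (ρ - 1)))
    (lam : ℂ)
    (z w : ℂ → ℂ)
    (hz : ∀ s : ℂ, z s = -lam * s * ∏ j, (1 + (c j - 1) * s))
    (hw : ∀ s : ℂ, w s = lam ^ 2 * s * (s - 1) * ∏ j, (1 + (c j - 1) * s) ^ 2)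
    (τ : ℂ) (hτ1 : τ ≠ -1)
    (z₀ ζ ζs zs ws : ℂ)
    (hz₀ : z₀ = ((τ + 1) / τ) * z (τ ^ 2))
    (hζ : ζ = τ / (τ + 1))
    (hden : ρ * ζ - (ρ - 1) ≠ 0)
    (hζs : ζs = η ζ)
    (hzs : zs = z₀ * ζs)
    (hws : ws = 2 * zs * z₀ - z₀ ^ 2) :
    zs = z ((τ + 1 / ((N : ℂ) + 1)) ^ 2) ∧ ws = w ((τ + 1 / ((N : ℂ) + 1)) ^ 2) := by
  obtain rfl : c = a2Coeff N := funext hc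
  replace hz : ∀ s, z s = -lam * s * a2Prod N s := hz
  replace hw : ∀ s, w s = lam ^ 2 * s * (s - 1) * a2Prod N s ^ 2 := fun s => by
    rw [hw, a2Prod, prod_pow]
  have hτ1' : τ + 1 ≠ 0 := fun h => hτ1 (eq_neg_of_add_eq_zero_left h)
  set τ' := τ + 1 / ((N : ℂ) + 1)
  have hnum : (ρ - 1) * ζ - (ρ - 2) = τ' / (τ + 1) := by
    rw [hζ, mul_div_add_one_sub _ _ _ hτ1', hρ]; ring
  have hden' : ρ * ζ - (ρ - 1) = (τ' - 1) / (τ + 1) := by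
    rw [hζ, mul_div_add_one_sub _ _ _ hτ1', hρ]; ring
  have hτ' : τ' - 1 ≠ 0 := fun h => hden (by rw [hden', h, zero_div])
  have hζs' : ζs = τ' / (τ' - 1) := by
    rw [hζs, hη, hnum, hden', div_div_div_cancel_right₀ hτ1']
  have hz₀' : z₀ = -lam * τ' * (τ' - 1) * a2Prod N (τ' ^ 2) :=
    calc z₀ = -lam * (τ ^ 2 * ((τ + 1) * a2Prod N (τ ^ 2)) / τ) := by rw [hz₀, hz]; ring
      _ = -lam * (τ * (τ + 1) * a2Prod N (τ ^ 2)) := by rw [div_sq_cancel]; ring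
      _ = -lam * τ' * (τ' - 1) * a2Prod N (τ' ^ 2) := by rw [a2Prod_shift]; ring
  have hzs' : zs = z (τ' ^ 2) := by
    rw [hzs, hz, hz₀', hζs']
    field_simp
  refine ⟨hzs', ?_⟩
  rw [hws, hzs', hz₀', hz, hw]
  ring

/-- Type a2 dual billiards: in the coordinate `τ` on an invariant curve, the dual billiard
map acts as the translation `τ ↦ τ + 1/(N+1)`. -/
theorem stmt_5 (N : ℕ) (hN : 1 ≤ N)
    (c : Fin N → ℂ)
    (hc : ∀ j : Fin N, c j =
      -((((j : ℕ) : ℂ) + 1) * (2 * (N : ℂ) + 2 - (((j : ℕ) : ℂ) + 1))) /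
        ((N : ℂ) + 1 - (((j : ℕ) : ℂ) + 1)) ^ 2)
    (ρ : ℂ) (hρ : ρ = 2 - 1 / ((N : ℂ) + 1))
    (η : ℂ → ℂ) (hη : ∀ ζ : ℂ, η ζ = ((ρ - 1) * ζ - (ρ - 2)) / (ρ * ζ - (ρ - 1)))
    (lam : ℂ) (hlam : lam ≠ 0)
    (z w : ℂ → ℂ)
    (hz : ∀ s : ℂ, z s = -lam * s * ∏ j, (1 + (c j - 1) * s))
    (hw : ∀ s : ℂ, w s = lam ^ 2 * s * (s - 1) * ∏ j, (1 + (c j - 1) * s) ^ 2)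
    (τ : ℂ) (hτ0 : τ ≠ 0) (hτ1 : τ ≠ -1)
    (z₀ ζ ζs zs ws : ℂ)
    (hz₀ : z₀ = ((τ + 1) / τ) * z (τ ^ 2))
    (hζ : ζ = τ / (τ + 1))
    (hden : ρ * ζ - (ρ - 1) ≠ 0)
    (hζs : ζs = η ζ)
    (hzs : zs = z₀ * ζs)
    (hws : ws = 2 * zs * z₀ - z₀ ^ 2) :
    zs = z ((τ + 1 / ((N : ℂ) + 1)) ^ 2) ∧ ws = w ((τ + 1 / ((N : ℂ) + 1)) ^ 2) :=
  stmt_5_general N c hc ρ hρ η hη lam z w hz hw τ hτ1 z₀ ζ ζs zs ws hz₀ hζ hden hζs hzs hws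
end

section
/- Let R_{b1}(z,w) = (w − z²)² / ((w + 3z²)(z − 1)(z − w)). Fix λ ∈ ℂ, λ ≠ 0, and for t ∈ ℂ define z(t) = t((1−λ)t + λ) / (λ(t−1)(4−t)) and w(t) = t²((1−λ)t + λ)(3λ − t) / (λ²(t−1)(4−t)²). Then for every t ∈ ℂ such that (t−1)(4−t) ≠ 0 and (w(t) + 3z(t)²)(z(t) − 1)(z(t) − w(t)) ≠ 0, one has R_{b1}(z(t), w(t)) = λ. (Thus t ↦ (z(t), w(t)) is a rational parametrization of the level curve {R_{b1} = λ}.) -/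
/-!
Write `p = (1 - λ) t + λ` and `q = t² - 4λt + 4λ`. Along the parametrization all four factors
of `R_{b1}` are monomials in `t`, `p`, `q`, `t - 1`, `4 - t` and `λ`:
`w - z² = -t² p q / (λ² (t-1)² (4-t)²)`, `w + 3z² = t³ p / (λ² (t-1)² (4-t))`,
`z - 1 = q / (λ (t-1)(4-t))` and `z - w = t p q / (λ² (t-1)(4-t)²)`.
Hence `(w - z²)² = λ (w + 3z²)(z - 1)(z - w)`.
-/

section Parametrization

variable {K : Type*} [Field K]

def paramZ (lam t : K) : K :=
  t * ((1 - lam) * t + lam) / (lam * (t - 1) * (4 - t))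

def paramW (lam t : K) : K :=
  t ^ 2 * ((1 - lam) * t + lam) * (3 * lam - t) / (lam ^ 2 * (t - 1) * (4 - t) ^ 2)

variable {lam t : K}

lemma paramZ_eq_zero_of_degenerate (h : lam * (t - 1) * (4 - t) = 0) : paramZ lam t = 0 := by
  rw [paramZ, h, div_zero]

lemma paramW_eq_zero_of_degenerate (h : lam * (t - 1) * (4 - t) = 0) : paramW lam t = 0 := by
  rw [paramW, show lam ^ 2 * (t - 1) * (4 - t) ^ 2 = lam * (4 - t) * (lam * (t - 1) * (4 - t)) by
    ring, h, mul_zero, div_zero]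

section Nondegenerate

variable (hlam : lam ≠ 0) (ht₁ : t - 1 ≠ 0) (ht₄ : 4 - t ≠ 0)
include hlam ht₁ ht₄

lemma paramW_sub_paramZ_sq :
    paramW lam t - paramZ lam t ^ 2 =
      -(t ^ 2 * ((1 - lam) * t + lam) * (t ^ 2 - 4 * lam * t + 4 * lam)) /
        (lam ^ 2 * (t - 1) ^ 2 * (4 - t) ^ 2) := by
  rw [paramW, paramZ]
  field_simp
  ring

lemma paramW_add_three_mul_paramZ_sq :
    paramW lam t + 3 * paramZ lam t ^ 2 =
      t ^ 3 * ((1 - lam) * t + lam) / (lam ^ 2 * (t - 1) ^ 2 * (4 - t)) := by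
  rw [paramW, paramZ]
  field_simp
  ring

lemma paramZ_sub_one :
    paramZ lam t - 1 = (t ^ 2 - 4 * lam * t + 4 * lam) / (lam * (t - 1) * (4 - t)) := by
  rw [paramZ]
  field_simp
  ring

lemma paramZ_sub_paramW :
    paramZ lam t - paramW lam t =
      t * ((1 - lam) * t + lam) * (t ^ 2 - 4 * lam * t + 4 * lam) /
        (lam ^ 2 * (t - 1) * (4 - t) ^ 2) := by
  rw [paramW, paramZ]
  field_simp
  ring

end Nondegenerate

/-- Holds for all `λ, t`: in the degenerate case `λ (t - 1)(4 - t) = 0` both `paramZ` and `paramW`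
are the junk value `0`, and both sides vanish. -/
theorem sq_paramW_sub_paramZ_sq (lam t : K) :
    (paramW lam t - paramZ lam t ^ 2) ^ 2 =
      lam * ((paramW lam t + 3 * paramZ lam t ^ 2) * (paramZ lam t - 1) *
        (paramZ lam t - paramW lam t)) := by
  by_cases h : lam * (t - 1) * (4 - t) = 0
  · simp [paramZ_eq_zero_of_degenerate h, paramW_eq_zero_of_degenerate h]
  · obtain ⟨⟨hlam, ht₁⟩, ht₄⟩ : (lam ≠ 0 ∧ t - 1 ≠ 0) ∧ 4 - t ≠ 0 := by
      simpa only [mul_ne_zero_iff] using h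
    rw [paramW_sub_paramZ_sq hlam ht₁ ht₄, paramW_add_three_mul_paramZ_sq hlam ht₁ ht₄,
      paramZ_sub_one hlam ht₁ ht₄, paramZ_sub_paramW hlam ht₁ ht₄]
    field_simp

end Parametrization

theorem stmt_6_general (lam : ℂ)
    (z w : ℂ → ℂ)
    (hz : ∀ t : ℂ, z t = t * ((1 - lam) * t + lam) / (lam * (t - 1) * (4 - t)))
    (hw : ∀ t : ℂ, w t = t ^ 2 * ((1 - lam) * t + lam) * (3 * lam - t) /
      (lam ^ 2 * (t - 1) * (4 - t) ^ 2))
    (t : ℂ)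
    (hden : (w t + 3 * z t ^ 2) * (z t - 1) * (z t - w t) ≠ 0) :
    (w t - z t ^ 2) ^ 2 / ((w t + 3 * z t ^ 2) * (z t - 1) * (z t - w t)) = lam := by
  obtain rfl : z = paramZ lam := funext hz
  obtain rfl : w = paramW lam := funext hw
  rw [sq_paramW_sub_paramZ_sq, mul_div_cancel_right₀ lam hden]

/-- Type b1 dual billiards: rational parametrization of the level curve `{R_{b1} = λ}`
of `R_{b1}(z,w) = (w − z²)² / ((w + 3z²)(z − 1)(z − w))`. -/
theorem stmt_6 (lam : ℂ) (hlam : lam ≠ 0)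
    (z w : ℂ → ℂ)
    (hz : ∀ t : ℂ, z t = t * ((1 - lam) * t + lam) / (lam * (t - 1) * (4 - t)))
    (hw : ∀ t : ℂ, w t = t ^ 2 * ((1 - lam) * t + lam) * (3 * lam - t) /
      (lam ^ 2 * (t - 1) * (4 - t) ^ 2))
    (t : ℂ) (ht : (t - 1) * (4 - t) ≠ 0)
    (hden : (w t + 3 * z t ^ 2) * (z t - 1) * (z t - w t) ≠ 0) :
    (w t - z t ^ 2) ^ 2 / ((w t + 3 * z t ^ 2) * (z t - 1) * (z t - w t)) = lam :=
  stmt_6_general lam z w hz hw t hden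
end

section
/- Let R_{b1}(z,w) = (w − z²)² / ((w + 3z²)(z − 1)(z − w)), defined and complex-differentiable on the open set where (w + 3z²)(z − 1)(z − w) ≠ 0, and let G(z,w) = (w + 3z²)(z − 1)(z − w)/(w − z²)² = 1/R_{b1}, defined and complex-differentiable where w ≠ z². Then: (1) the complex derivative (gradient) of R_{b1} vanishes at (0, −1) and at (1/3, 1), and R_{b1}(0, −1) = 1, R_{b1}(1/3, 1) = 4/3; (2) the complex derivative of G vanishes at (1, −3) and at (−1/3, −1/3), and G(1, −3) = G(−1/3, −1/3) = 0. -/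
/-! Away from the zeros of `g`, `d(f/g) = (g df - f dg)/g²`, so `f/g` is critical at `p` exactly
when `g(p) ∇f(p) = f(p) ∇g(p)`; with the gradients of `N = (w - z²)²` and
`D = (w + 3z²)(z - 1)(z - w)` written out, each of the four points is a numerical check.
The critical points of `G = D/N` at value `0` are the points where two of the three factor
curves of `D` meet, so that `D` vanishes to second order there. -/

open ContinuousLinearMap

section

variable {𝕜 : Type*} [NontriviallyNormedField 𝕜]

theorem hasFDerivAt_div_zero_of_smul_eq {E : Type*} [NormedAddCommGroup E] [NormedSpace 𝕜 E]
    {f g : E → 𝕜} {f' g' : E →L[𝕜] 𝕜} {p : E} (hf : HasFDerivAt f f' p)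
    (hg : HasFDerivAt g g' p) (hgp : g p ≠ 0) (h : g p • f' = f p • g') :
    HasFDerivAt (fun x => f x / g x) (0 : E →L[𝕜] 𝕜) p := by
  have hinv : HasFDerivAt (fun x => (g x)⁻¹) (-(g p ^ 2)⁻¹ • g') p :=
    (hasDerivAt_inv hgp).comp_hasFDerivAt p hg
  simp only [div_eq_mul_inv]
  refine (hf.fun_mul hinv).congr_fderiv ?_
  rw [← eq_inv_smul_iff₀ hgp] at h
  rw [h]
  match_scalars
  field_simp
  ring

theorem hasFDerivAt_div_zero_of_partials {f g : 𝕜 × 𝕜 → 𝕜} {p : 𝕜 × 𝕜} {fz fw gz gw : 𝕜}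
    (hf : HasFDerivAt f (fz • fst 𝕜 𝕜 𝕜 + fw • snd 𝕜 𝕜 𝕜) p)
    (hg : HasFDerivAt g (gz • fst 𝕜 𝕜 𝕜 + gw • snd 𝕜 𝕜 𝕜) p) (hgp : g p ≠ 0)
    (hz : g p * fz = f p * gz) (hw : g p * fw = f p * gw) :
    HasFDerivAt (fun x => f x / g x) (0 : 𝕜 × 𝕜 →L[𝕜] 𝕜) p :=
  hasFDerivAt_div_zero_of_smul_eq hf hg hgp <| by
    simp only [smul_add, smul_smul, hz, hw]

def b1Num (p : 𝕜 × 𝕜) : 𝕜 := (p.2 - p.1 ^ 2) ^ 2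

def b1Den (p : 𝕜 × 𝕜) : 𝕜 := (p.2 + 3 * p.1 ^ 2) * (p.1 - 1) * (p.1 - p.2)

theorem hasFDerivAt_b1Num (p : 𝕜 × 𝕜) :
    HasFDerivAt b1Num
      ((-4 * p.1 * (p.2 - p.1 ^ 2)) • fst 𝕜 𝕜 𝕜 + (2 * (p.2 - p.1 ^ 2)) • snd 𝕜 𝕜 𝕜) p := by
  have hz : HasFDerivAt Prod.fst (fst 𝕜 𝕜 𝕜) p := hasFDerivAt_fst
  have hw : HasFDerivAt Prod.snd (snd 𝕜 𝕜 𝕜) p := hasFDerivAt_snd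
  refine ((hw.fun_sub (hz.pow 2)).pow 2).congr_fderiv ?_
  module

theorem hasFDerivAt_b1Den (p : 𝕜 × 𝕜) :
    HasFDerivAt b1Den
      ((6 * p.1 * (p.1 - 1) * (p.1 - p.2) + (p.2 + 3 * p.1 ^ 2) * (p.1 - p.2) +
          (p.2 + 3 * p.1 ^ 2) * (p.1 - 1)) • fst 𝕜 𝕜 𝕜 +
        ((p.1 - 1) * (p.1 - p.2) - (p.2 + 3 * p.1 ^ 2) * (p.1 - 1)) • snd 𝕜 𝕜 𝕜) p := by
  have hz : HasFDerivAt Prod.fst (fst 𝕜 𝕜 𝕜) p := hasFDerivAt_fst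
  have hw : HasFDerivAt Prod.snd (snd 𝕜 𝕜 𝕜) p := hasFDerivAt_snd
  refine (((hw.fun_add ((hz.pow 2).const_mul 3)).fun_mul (hz.sub_const 1)).fun_mul
    (hz.fun_sub hw)).congr_fderiv ?_
  module

end

/-- The true critical points of the integral `R_{b1}` of the type b1 dual billiard:
`(0,−1)` with value `1`, `(1/3, 1)` with value `4/3`, and the critical points
`(1,−3)`, `(−1/3,−1/3)` of `G = 1/R_{b1}` with value `0` (i.e. value `∞` of `R_{b1}`). -/
theorem stmt_7 (R G : ℂ × ℂ → ℂ)
    (hR : ∀ p : ℂ × ℂ, R p =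
      (p.2 - p.1 ^ 2) ^ 2 / ((p.2 + 3 * p.1 ^ 2) * (p.1 - 1) * (p.1 - p.2)))
    (hG : ∀ p : ℂ × ℂ, G p =
      ((p.2 + 3 * p.1 ^ 2) * (p.1 - 1) * (p.1 - p.2)) / (p.2 - p.1 ^ 2) ^ 2) :
    (fderiv ℂ R (0, -1) = 0 ∧ R (0, -1) = 1) ∧
    (fderiv ℂ R (1/3, 1) = 0 ∧ R (1/3, 1) = 4/3) ∧
    (fderiv ℂ G (1, -3) = 0 ∧ G (1, -3) = 0) ∧
    (fderiv ℂ G (-1/3, -1/3) = 0 ∧ G (-1/3, -1/3) = 0) := by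
  obtain rfl : R = fun p => b1Num p / b1Den p := funext hR
  obtain rfl : G = fun p => b1Den p / b1Num p := funext hG
  have critR (p : ℂ × ℂ) :=
    hasFDerivAt_div_zero_of_partials (hasFDerivAt_b1Num p) (hasFDerivAt_b1Den p)
  have critG (p : ℂ × ℂ) :=
    hasFDerivAt_div_zero_of_partials (hasFDerivAt_b1Den p) (hasFDerivAt_b1Num p)
  refine ⟨⟨(critR _ ?_ ?_ ?_).fderiv, ?_⟩, ⟨(critR _ ?_ ?_ ?_).fderiv, ?_⟩,
    ⟨(critG _ ?_ ?_ ?_).fderiv, ?_⟩, ⟨(critG _ ?_ ?_ ?_).fderiv, ?_⟩⟩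
  all_goals norm_num [b1Num, b1Den]
end

section
/- For all z, w ∈ ℂ one has the polynomial identity (w − z²)² − (w + 3z²)(z − 1)(z − w) = −z·(2z³ − 3z²w − 3z² + 6wz − w² − w). Moreover the cubic H(z,w) = 2z³ − 3z²w − 3z² + 6wz − w² − w vanishes along the rational parametrization t ↦ (t/((t−1)(4−t)), t²(3−t)/((t−1)(4−t)²)): for every t ∈ ℂ with (t−1)(4−t) ≠ 0, H(t/((t−1)(4−t)), t²(3−t)/((t−1)(4−t)²)) = 0. (Thus the critical level curve {R_{b1} = 1} of R_{b1}(z,w) = (w−z²)²/((w+3z²)(z−1)(z−w)) is the union of the line {z = 0} and the rational cubic {H = 0}.) -/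
/-!
Expanding shows that the quartic `(w - z²)² - (w + 3z²)(z - 1)(z - w)` has no constant term in `z`
and equals `-z · H(z, w)`. For the cubic `H`, clearing the denominators `((t - 1)(4 - t))³` and
`((t - 1)(4 - t)²)²` of the parametrization turns `H(z(t), w(t)) = 0` into a polynomial identity in `t`.
-/

/-- The cubic factor `H` of the critical level curve of `R_{b1}`. -/
def b1Cubic {R : Type*} [CommRing R] (z w : R) : R :=
  2*z^3 - 3*z^2*w - 3*z^2 + 6*w*z - w^2 - w

theorem b1_quartic_eq_neg_mul_b1Cubic {R : Type*} [CommRing R] (z w : R) :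
    (w - z^2)^2 - (w + 3*z^2)*(z - 1)*(z - w) = -z * b1Cubic z w := by
  unfold b1Cubic; ring

theorem b1Cubic_param_eq_zero {K : Type*} [Field K] (t : K) (ht : (t - 1) * (4 - t) ≠ 0) :
    b1Cubic (t / ((t - 1) * (4 - t))) (t^2 * (3 - t) / ((t - 1) * (4 - t)^2)) = 0 := by
  have h₁ : t - 1 ≠ 0 := left_ne_zero_of_mul ht
  have h₄ : 4 - t ≠ 0 := right_ne_zero_of_mul ht
  unfold b1Cubic
  field_simp
  ring

/-- The critical level curve `{R_{b1} = 1}` is the union of the line `{z = 0}` and the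
rational cubic `{H = 0}`, where `H(z,w) = 2z³ − 3z²w − 3z² + 6wz − w² − w`. -/
theorem stmt_8 (H : ℂ → ℂ → ℂ)
    (hH : ∀ z w : ℂ, H z w = 2*z^3 - 3*z^2*w - 3*z^2 + 6*w*z - w^2 - w) :
    (∀ z w : ℂ, (w - z^2)^2 - (w + 3*z^2)*(z - 1)*(z - w) = -z * H z w) ∧
    (∀ t : ℂ, (t - 1) * (4 - t) ≠ 0 →
      H (t / ((t - 1) * (4 - t))) (t^2 * (3 - t) / ((t - 1) * (4 - t)^2)) = 0) := by
  obtain rfl : H = b1Cubic := funext₂ hH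
  exact ⟨b1_quartic_eq_neg_mul_b1Cubic, b1Cubic_param_eq_zero⟩
end

section
/- Let ε = e^{−2πi/3} ∈ ℂ and let C₁(z,w) = 4z² + 3(w² + 1) + 6z(w + 1) + 5w, C_ε(z,w) = 4ε̄z² + 3(εw² + 1) + 6z(w + ε) + 5ε̄w, C_{ε̄}(z,w) = 4εz² + 3(ε̄w² + 1) + 6z(w + ε̄) + 5εw, where ε̄ = e^{2πi/3}. There exists a constant c ∈ ℂ, c ≠ 0, such that for all z, w ∈ ℂ one has 64(w − z²)³ − 27(1 + w³ − 2zw)² = c·C₁(z,w)·C_ε(z,w)·C_{ε̄}(z,w). (Thus the critical level curve {R_{c1} = 27/64} of R_{c1}(z,w) = (w − z²)³/(1 + w³ − 2zw)² is the union of three conics permuted by the order-3 symmetry (z,w) ↦ (εz, ε²w).) -/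
/-!
The cube roots of unity `ε`, `ε̄` are the roots of `X² + X + 1`: `ε + ε̄ = -1` and `ε ε̄ = 1`.
Only these two relations enter: modulo them, `-C₁ C_ε C_ε̄` expands to the sextic, so the
factorisation holds over any commutative ring containing such a pair, with `c = -1`.
-/

open Complex

/-- `conic 1 1`, `conic ε ε̄` and `conic ε̄ ε` are the conics `C₁`, `C_ε` and `C_ε̄`. -/
def conic {R : Type*} [CommRing R] (a b z w : R) : R :=
  4*b*z^2 + 3*(a*w^2 + 1) + 6*z*(w + a) + 5*b*w

theorem sextic_eq_neg_conic_mul {R : Type*} [CommRing R] {a b : R}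
    (hsum : a + b + 1 = 0) (hprod : a * b = 1) (z w : R) :
    64*(w - z^2)^3 - 27*(1 + w^3 - 2*z*w)^2 =
      -conic 1 1 z w * conic a b z w * conic b a z w := by
  unfold conic
  grind

theorem exp_neg_two_pi_I_div_three_mul :
    exp (-(2 * (Real.pi : ℂ) * I) / 3) * exp (2 * (Real.pi : ℂ) * I / 3) = 1 := by
  rw [← exp_add, neg_div, neg_add_cancel, exp_zero]

theorem exp_neg_two_pi_I_div_three_add :
    exp (-(2 * (Real.pi : ℂ) * I) / 3) + exp (2 * (Real.pi : ℂ) * I / 3) + 1 = 0 := by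
  have hω : IsPrimitiveRoot (exp (2 * (Real.pi : ℂ) * I / 3)) 3 := by
    simpa using isPrimitiveRoot_exp 3 (by norm_num)
  have hgeom := hω.geom_sum_eq_zero (by norm_num)
  simp only [Finset.sum_range_succ, Finset.sum_range_zero] at hgeom
  linear_combination hgeom - exp (-(2 * (Real.pi : ℂ) * I) / 3) * hω.pow_eq_one
    + exp (2 * (Real.pi : ℂ) * I / 3) ^ 2 * exp_neg_two_pi_I_div_three_mul

/-- The critical level curve `{R_{c1} = 27/64}` of `R_{c1}(z,w) = (w−z²)³/(1+w³−2zw)²`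
is the union of three conics permuted by the order-3 symmetry `(z,w) ↦ (εz, ε²w)`. -/
theorem stmt_10 (ε εb : ℂ)
    (hε : ε = Complex.exp (-(2 * (Real.pi : ℂ) * Complex.I) / 3))
    (hεb : εb = Complex.exp ((2 * (Real.pi : ℂ) * Complex.I) / 3))
    (C₁ Cε Cεb : ℂ → ℂ → ℂ)
    (hC₁ : ∀ z w : ℂ, C₁ z w = 4*z^2 + 3*(w^2 + 1) + 6*z*(w + 1) + 5*w)
    (hCε : ∀ z w : ℂ, Cε z w = 4*εb*z^2 + 3*(ε*w^2 + 1) + 6*z*(w + ε) + 5*εb*w)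
    (hCεb : ∀ z w : ℂ, Cεb z w = 4*ε*z^2 + 3*(εb*w^2 + 1) + 6*z*(w + εb) + 5*ε*w) :
    ∃ c : ℂ, c ≠ 0 ∧ ∀ z w : ℂ,
      64*(w - z^2)^3 - 27*(1 + w^3 - 2*z*w)^2 = c * C₁ z w * Cε z w * Cεb z w := by
  subst hε hεb
  refine ⟨-1, neg_ne_zero.mpr one_ne_zero, fun z w => ?_⟩
  rw [hC₁, hCε, hCεb, sextic_eq_neg_conic_mul exp_neg_two_pi_I_div_three_add
    exp_neg_two_pi_I_div_three_mul, conic, conic, conic]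
  ring
end

section
/- Let D(z,w) = 8z³ − 8z²w − 8z² − w² − w + 10zw. There exists a constant c ∈ ℂ, c ≠ 0, such that for all z, w ∈ ℂ one has 64(w − z²)³ + 9·D(z,w)² = c·(w + 8z²)·(9(w − z)² + w − z²)·(9(z − 1)² + w − z²). (Thus the critical level curve {R_{c2} = −9/64} of R_{c2}(z,w) = (w − z²)³/D(z,w)² is the union of the three conics {w + 8z² = 0}, {9(w − z)² + w − z² = 0} and {9(z − 1)² + w − z² = 0}.) -/
/-- The critical level curve `{R_{c2} = −9/64}` of `R_{c2}(z,w) = (w−z²)³/D(z,w)²`,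
`D(z,w) = 8z³ − 8z²w − 8z² − w² − w + 10zw`, is the union of the three conics
`{w + 8z² = 0}`, `{9(w−z)² + w − z² = 0}`, `{9(z−1)² + w − z² = 0}`. -/
theorem stmt_11 (D : ℂ → ℂ → ℂ)
    (hD : ∀ z w : ℂ, D z w = 8*z^3 - 8*z^2*w - 8*z^2 - w^2 - w + 10*z*w) :
    ∃ c : ℂ, c ≠ 0 ∧ ∀ z w : ℂ,
      64*(w - z^2)^3 + 9*(D z w)^2
        = c * (w + 8*z^2) * (9*(w - z)^2 + w - z^2) * (9*(z - 1)^2 + w - z^2) :=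
  ⟨1, one_ne_zero, fun z w => by rw [hD]; ring⟩
end

section
/- Let 𝒫(z,w) = w + 8z² − 7z³ + 8z²w + w² − 11zw, and for τ ∈ ℂ define z₂(τ) = (τ + 9)(2τ + 27)/(τ(5τ + 72)) and w₂(τ) = (2τ + 27)²(2τ − 9)/(τ²(5τ + 72)). Then for every τ ∈ ℂ with τ(5τ + 72) ≠ 0 one has 𝒫(z₂(τ), w₂(τ)) = 0. (Thus τ ↦ (z₂(τ), w₂(τ)) is a rational parametrization of the cubic component Γ_{d,−1/3,2} = {𝒫 = 0} of the critical level curve {R_d = −1/3}.) -/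
/-- Rational parametrization of the cubic component
`Γ_{d,−1/3,2} = {w + 8z² − 7z³ + 8z²w + w² − 11zw = 0}` of the critical level curve
`{R_d = −1/3}`. -/
theorem stmt_14 (P : ℂ → ℂ → ℂ)
    (hP : ∀ z w : ℂ, P z w = w + 8*z^2 - 7*z^3 + 8*z^2*w + w^2 - 11*z*w)
    (z₂ w₂ : ℂ → ℂ)
    (hz₂ : ∀ τ : ℂ, z₂ τ = (τ + 9) * (2*τ + 27) / (τ * (5*τ + 72)))
    (hw₂ : ∀ τ : ℂ, w₂ τ = (2*τ + 27)^2 * (2*τ - 9) / (τ^2 * (5*τ + 72))) :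
    ∀ τ : ℂ, τ * (5*τ + 72) ≠ 0 → P (z₂ τ) (w₂ τ) = 0 := by
  intro τ h
  obtain ⟨hτ, h72⟩ := mul_ne_zero_iff.mp h
  rw [hP, hz₂, hw₂]
  field_simp
  ring
end

section
/- Let R_d(z,w) = (w − z²)³ / ((w + 8z²)(z − 1)(w + 8z² + 4w² + 5wz² − 14zw − 4z³)). Then: (1) for every t ∈ ℂ, setting z₃(t) = −(9t + 32)(t + 8)/(40t(3 + t)) and w₃(t) = −(t + 8)²(3t + 8)(3t + 4)/(40t²(t + 3)²), if t(3 + t) ≠ 0 and the denominator of R_d at (z₃(t), w₃(t)) is nonzero, then R_d(z₃(t), w₃(t)) = −9/32; (2) for every (z, w) ∈ ℂ² with w + 8z² − 9zw = 0 and the denominator of R_d at (z, w) nonzero, one has R_d(z, w) = −9/32. (Thus the critical level curve {R_d = −9/32} contains the rational quartic parametrized by (z₃, w₃) and the conic {w + 8z² − 9zw = 0}.) -/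
/-!
`R_d = -9/32` at a point off the polar locus exactly when `32 (w - z²)³ + 9 · den` vanishes there,
and this polynomial factors as `-(w + 8z² - 9zw) · q(z, w)` with `q` a quartic. The conic is thus
one component of the level curve, and `(z₃(t), w₃(t))` is a rational parametrization of `q = 0`.
-/

namespace ExoticDualBilliardD

variable {K : Type*} [Field K]

def den (z w : K) : K :=
  (w + 8*z^2) * (z - 1) * (w + 8*z^2 + 4*w^2 + 5*w*z^2 - 14*z*w - 4*z^3)

def conic (z w : K) : K := w + 8*z^2 - 9*z*w

def quartic (z w : K) : K :=
  4*w^2 + 37*z^2*w - 54*z*w + 9*w + 40*z^4 - 108*z^3 + 72*z^2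

def paramZ (t : K) : K := -((9*t + 32) * (t + 8)) / (40 * t * (3 + t))

def paramW (t : K) : K := -((t + 8)^2 * (3*t + 8) * (3*t + 4)) / (40 * t^2 * (t + 3)^2)

theorem level_factorization (z w : K) :
    32 * (w - z^2)^3 + 9 * den z w = -(conic z w * quartic z w) := by
  unfold den conic quartic
  ring

theorem div_den_eq_of_conic_mul_quartic_eq_zero [CharZero K] {z w : K} (hden : den z w ≠ 0)
    (h : conic z w * quartic z w = 0) : (w - z^2)^3 / den z w = -9/32 := by
  rw [div_eq_iff hden]
  linear_combination (level_factorization z w - h) / 32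

theorem quartic_param [CharZero K] {t : K} (ht : t * (3 + t) ≠ 0) :
    quartic (paramZ t) (paramW t) = 0 := by
  have ht0 : t ≠ 0 := left_ne_zero_of_mul ht
  have ht3 : 3 + t ≠ 0 := right_ne_zero_of_mul ht
  have ht3' : t + 3 ≠ 0 := by rwa [add_comm]
  unfold quartic paramZ paramW
  field_simp
  ring

end ExoticDualBilliardD

open ExoticDualBilliardD in
/-- The critical level curve `{R_d = −9/32}` of the type d integral contains the rational
quartic parametrized by `(z₃, w₃)` and the conic `{w + 8z² − 9zw = 0}`. -/
theorem stmt_15 (Rd : ℂ → ℂ → ℂ)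
    (hRd : ∀ z w : ℂ, Rd z w = (w - z^2)^3 /
      ((w + 8*z^2) * (z - 1) * (w + 8*z^2 + 4*w^2 + 5*w*z^2 - 14*z*w - 4*z^3))) :
    (∀ t : ℂ, t * (3 + t) ≠ 0 →
      ∀ z₃ w₃ : ℂ,
        z₃ = -((9*t + 32) * (t + 8)) / (40 * t * (3 + t)) →
        w₃ = -((t + 8)^2 * (3*t + 8) * (3*t + 4)) / (40 * t^2 * (t + 3)^2) →
        (w₃ + 8*z₃^2) * (z₃ - 1) *
          (w₃ + 8*z₃^2 + 4*w₃^2 + 5*w₃*z₃^2 - 14*z₃*w₃ - 4*z₃^3) ≠ 0 →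
        Rd z₃ w₃ = -9/32) ∧
    (∀ z w : ℂ, w + 8*z^2 - 9*z*w = 0 →
      (w + 8*z^2) * (z - 1) *
        (w + 8*z^2 + 4*w^2 + 5*w*z^2 - 14*z*w - 4*z^3) ≠ 0 →
      Rd z w = -9/32) := by
  refine ⟨fun t ht z₃ w₃ hz hw hden => ?_, fun z w hconic hden => ?_⟩
  · subst hz hw
    rw [hRd]
    exact div_den_eq_of_conic_mul_quartic_eq_zero hden (mul_eq_zero_of_right _ (quartic_param ht))
  · rw [hRd]
    exact div_den_eq_of_conic_mul_quartic_eq_zero hden (mul_eq_zero_of_left hconic _)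
end

section
/- Let R_d(z,w) = (w − z²)³ / ((w + 8z²)(z − 1)(w + 8z² + 4w² + 5wz² − 14zw − 4z³)), complex-differentiable where its denominator is nonzero, and let G_d = 1/R_d, complex-differentiable where w ≠ z². Then: (1) the complex derivative of R_d vanishes at (2/5, 8/5), and R_d(2/5, 8/5) = −1/3; (2) the complex derivative of R_d vanishes at (1/10, −4/5), and R_d(1/10, −4/5) = −9/32; (3) the complex derivative of G_d vanishes at (1, −8) and at (−1/2, −2), and G_d(1, −8) = G_d(−1/2, −2) = 0. -/
/-!
Write `R_d = num / den`. By the quotient rule, at a point `p` with `den p ≠ 0` the map `num / den`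
is critical as soon as `den p • ∇num p = num p • ∇den p`, and symmetrically for `den / num` where
`num p ≠ 0`; at the four points this is a finite check on the explicit partial derivatives.
At `(1, -8)` and `(-1/2, -2)` one has `den = 0 ≠ num`, so the identity says `∇den = 0`: these are
singular points of the curve `den = 0`.
-/

open ContinuousLinearMap

section Quotient

variable {𝕜 E : Type*} [NontriviallyNormedField 𝕜] [NormedAddCommGroup E] [NormedSpace 𝕜 E]
  {f g : E → 𝕜} {f' g' : E →L[𝕜] 𝕜} {x : E}

theorem HasFDerivAt.div (hf : HasFDerivAt f f' x) (hg : HasFDerivAt g g' x) (hx : g x ≠ 0) :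
    HasFDerivAt (fun y => f y / g y) ((g x ^ 2)⁻¹ • (g x • f' - f x • g')) x := by
  have h := hf.fun_mul ((hasFDerivAt_inv hx).comp x hg)
  simp only [Function.comp_def, ← div_eq_mul_inv] at h
  refine h.congr_fderiv (ext fun v => ?_)
  simp only [add_apply, smul_apply, comp_apply, toSpanSingleton_apply, smul_eq_mul, sub_apply]
  field_simp
  ring

theorem HasFDerivAt.div_eq_zero_of_smul_eq (hf : HasFDerivAt f f' x) (hg : HasFDerivAt g g' x)
    (hx : g x ≠ 0) (h : g x • f' = f x • g') :
    HasFDerivAt (fun y => f y / g y) (0 : E →L[𝕜] 𝕜) x := by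
  simpa [h] using hf.div hg hx

end Quotient

namespace DualBilliardD

def num (p : ℂ × ℂ) : ℂ := (p.2 - p.1 ^ 2) ^ 3

def den (p : ℂ × ℂ) : ℂ :=
  (p.2 + 8*p.1^2) * (p.1 - 1) * (p.2 + 8*p.1^2 + 4*p.2^2 + 5*p.2*p.1^2 - 14*p.1*p.2 - 4*p.1^3)

def numZ (p : ℂ × ℂ) : ℂ := -6 * p.1 * (p.2 - p.1 ^ 2) ^ 2

def numW (p : ℂ × ℂ) : ℂ := 3 * (p.2 - p.1 ^ 2) ^ 2

def denZ (p : ℂ × ℂ) : ℂ :=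
  16 * p.1 * (p.1 - 1) * (p.2 + 8*p.1^2 + 4*p.2^2 + 5*p.2*p.1^2 - 14*p.1*p.2 - 4*p.1^3)
    + (p.2 + 8*p.1^2) * (p.2 + 8*p.1^2 + 4*p.2^2 + 5*p.2*p.1^2 - 14*p.1*p.2 - 4*p.1^3)
    + (p.2 + 8*p.1^2) * (p.1 - 1) * (16*p.1 + 10*p.2*p.1 - 14*p.2 - 12*p.1^2)

def denW (p : ℂ × ℂ) : ℂ :=
  (p.1 - 1) * (p.2 + 8*p.1^2 + 4*p.2^2 + 5*p.2*p.1^2 - 14*p.1*p.2 - 4*p.1^3)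
    + (p.2 + 8*p.1^2) * (p.1 - 1) * (1 + 8*p.2 + 5*p.1^2 - 14*p.1)

theorem hasFDerivAt_num (p : ℂ × ℂ) :
    HasFDerivAt num (numZ p • fst ℂ ℂ ℂ + numW p • snd ℂ ℂ ℂ) p := by
  have hz := hasFDerivAt_fst (𝕜 := ℂ) (E := ℂ) (F := ℂ) (p := p)
  have hw := hasFDerivAt_snd (𝕜 := ℂ) (E := ℂ) (F := ℂ) (p := p)
  have h := (hw.fun_sub (hz.pow 2)).pow 3
  refine h.congr_fderiv (ext fun v => ?_)
  simp only [numZ, numW, add_apply, sub_apply, smul_apply, coe_fst', coe_snd', smul_eq_mul,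
    nsmul_eq_mul]
  ring

theorem hasFDerivAt_den (p : ℂ × ℂ) :
    HasFDerivAt den (denZ p • fst ℂ ℂ ℂ + denW p • snd ℂ ℂ ℂ) p := by
  have hz := hasFDerivAt_fst (𝕜 := ℂ) (E := ℂ) (F := ℂ) (p := p)
  have hw := hasFDerivAt_snd (𝕜 := ℂ) (E := ℂ) (F := ℂ) (p := p)
  have hA := hw.fun_add ((hz.pow 2).const_mul 8)
  have hC := (((hA.fun_add ((hw.pow 2).const_mul 4)).fun_add
    ((hw.const_mul 5).fun_mul (hz.pow 2))).fun_sub ((hz.const_mul 14).fun_mul hw)).fun_sub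
    ((hz.pow 3).const_mul 4)
  have h := (hA.fun_mul (hz.sub_const 1)).fun_mul hC
  refine h.congr_fderiv (ext fun v => ?_)
  simp only [denZ, denW, add_apply, sub_apply, smul_apply, coe_fst', coe_snd', smul_eq_mul,
    nsmul_eq_mul]
  ring

theorem fderiv_num_div_den_eq_zero {p : ℂ × ℂ} (hp : den p ≠ 0)
    (hz : den p * numZ p = num p * denZ p) (hw : den p * numW p = num p * denW p) :
    fderiv ℂ (fun q => num q / den q) p = 0 := by
  refine ((hasFDerivAt_num p).div_eq_zero_of_smul_eq (hasFDerivAt_den p) hp ?_).fderiv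
  simp only [smul_add, smul_smul, hz, hw]

theorem fderiv_den_div_num_eq_zero {p : ℂ × ℂ} (hp : num p ≠ 0)
    (hz : num p * denZ p = den p * numZ p) (hw : num p * denW p = den p * numW p) :
    fderiv ℂ (fun q => den q / num q) p = 0 := by
  refine ((hasFDerivAt_den p).div_eq_zero_of_smul_eq (hasFDerivAt_num p) hp ?_).fderiv
  simp only [smul_add, smul_smul, hz, hw]

end DualBilliardD

open DualBilliardD

/-- The true critical points of the type d integral `R_d`: `(2/5, 8/5)` with value `−1/3`,
`(1/10, −4/5)` with value `−9/32`, and the critical points `(1, −8)`, `(−1/2, −2)` of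
`G_d = 1/R_d` with value `0` (i.e. value `∞` of `R_d`). -/
theorem stmt_16 (Rd Gd : ℂ × ℂ → ℂ)
    (hRd : ∀ p : ℂ × ℂ, Rd p = (p.2 - p.1^2)^3 /
      ((p.2 + 8*p.1^2) * (p.1 - 1) *
        (p.2 + 8*p.1^2 + 4*p.2^2 + 5*p.2*p.1^2 - 14*p.1*p.2 - 4*p.1^3)))
    (hGd : ∀ p : ℂ × ℂ, Gd p =
      ((p.2 + 8*p.1^2) * (p.1 - 1) *
        (p.2 + 8*p.1^2 + 4*p.2^2 + 5*p.2*p.1^2 - 14*p.1*p.2 - 4*p.1^3)) /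
      (p.2 - p.1^2)^3) :
    (fderiv ℂ Rd (2/5, 8/5) = 0 ∧ Rd (2/5, 8/5) = -1/3) ∧
    (fderiv ℂ Rd (1/10, -4/5) = 0 ∧ Rd (1/10, -4/5) = -9/32) ∧
    (fderiv ℂ Gd (1, -8) = 0 ∧ Gd (1, -8) = 0) ∧
    (fderiv ℂ Gd (-1/2, -2) = 0 ∧ Gd (-1/2, -2) = 0) := by
  obtain rfl : Rd = fun p => num p / den p := funext hRd
  obtain rfl : Gd = fun p => den p / num p := funext hGd
  refine ⟨⟨fderiv_num_div_den_eq_zero ?_ ?_ ?_, ?_⟩, ⟨fderiv_num_div_den_eq_zero ?_ ?_ ?_, ?_⟩,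
    ⟨fderiv_den_div_num_eq_zero ?_ ?_ ?_, ?_⟩, ⟨fderiv_den_div_num_eq_zero ?_ ?_ ?_, ?_⟩⟩
  all_goals norm_num [num, den, numZ, numW, denZ, denW]
end

section
/- For t ∈ ℂ define z₃(t) = −(9t + 32)(t + 8)/(40t(3 + t)) and w₃(t) = −(t + 8)²(3t + 8)(3t + 4)/(40t²(t + 3)²). Then z₃(−16/7) = 1, w₃(−16/7) = 1, and the complex derivatives of z₃ and of w₃ both vanish at t = −16/7. (Thus the rational quartic component Γ_{d,−9/32,1} of the critical level curve {R_d = −9/32} has a singular point — in fact a cusp — at (1,1), corresponding to the parameter value t = −16/7.) -/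
/-!
Both coordinates differ from `1` by a multiple of `(7t + 16)²`:
`z₃ t - 1 = -(7t + 16)² / (40 t (t + 3))` and
`w₃ t - 1 = -(7t + 16)² (t² + 4t + 8) / (40 t² (t + 3)²)`,
so near `t = -16/7` each is `1 + (t + 16/7)² g t` with `g` holomorphic there, which forces the
value `1` and a vanishing derivative.
-/

open Filter Topology

theorem eq_and_hasDerivAt_zero_of_eventuallyEq_add_sq_mul {𝕜 : Type*}
    [NontriviallyNormedField 𝕜] {f g : 𝕜 → 𝕜} {a c : 𝕜} (hg : DifferentiableAt 𝕜 g a)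
    (hfg : ∀ᶠ t in 𝓝 a, f t = c + (t - a) ^ 2 * g t) :
    f a = c ∧ HasDerivAt f 0 a := by
  refine ⟨by simpa using hfg.self_of_nhds, ?_⟩
  have hsq : HasDerivAt (fun t => (t - a) ^ 2) 0 a := by
    simpa using ((hasDerivAt_id a).sub_const a).fun_pow 2
  have h := (hsq.mul hg.hasDerivAt).const_add c
  simp only [sub_self, ne_eq, OfNat.ofNat_ne_zero, not_false_eq_true, zero_pow, zero_mul,
    add_zero] at h
  exact h.congr_of_eventuallyEq hfg

theorem eventually_ne_zero_and_add_three_ne_zero :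
    ∀ᶠ t in 𝓝 (-16 / 7 : ℂ), t ≠ 0 ∧ t + 3 ≠ 0 := by
  have hcont : Continuous fun t : ℂ => (t, t + 3) := by fun_prop
  exact (hcont.tendsto _).eventually
    ((isOpen_ne.prod isOpen_ne).mem_nhds (by norm_num : ((-16 / 7 : ℂ) ≠ 0 ∧ _)))

/-- The rational quartic component `Γ_{d,−9/32,1}` of the critical level curve
`{R_d = −9/32}`, parametrized by `t ↦ (z₃(t), w₃(t))`, has a singular point (a cusp)
at `(1,1)`, corresponding to the parameter value `t = −16/7`. -/
theorem stmt_19 (z₃ w₃ : ℂ → ℂ)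
    (hz₃ : ∀ t : ℂ, z₃ t = -((9*t + 32) * (t + 8)) / (40 * t * (3 + t)))
    (hw₃ : ∀ t : ℂ, w₃ t = -((t + 8)^2 * (3*t + 8) * (3*t + 4)) / (40 * t^2 * (t + 3)^2)) :
    z₃ (-16/7) = 1 ∧ w₃ (-16/7) = 1 ∧
    deriv z₃ (-16/7) = 0 ∧ deriv w₃ (-16/7) = 0 := by
  obtain ⟨hz₁, hz'⟩ := eq_and_hasDerivAt_zero_of_eventuallyEq_add_sq_mul
    (f := z₃) (g := fun t => -49 / (40 * t * (t + 3))) (a := -16 / 7) (c := 1)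
    (by fun_prop (disch := norm_num)) <| by
      filter_upwards [eventually_ne_zero_and_add_three_ne_zero] with t ⟨h0, h3⟩
      rw [hz₃, add_comm 3 t]
      field_simp
      ring
  obtain ⟨hw₁, hw'⟩ := eq_and_hasDerivAt_zero_of_eventuallyEq_add_sq_mul
    (f := w₃) (g := fun t => -49 * (t ^ 2 + 4 * t + 8) / (40 * t ^ 2 * (t + 3) ^ 2))
    (a := -16 / 7) (c := 1)
    (by fun_prop (disch := norm_num)) <| by
      filter_upwards [eventually_ne_zero_and_add_three_ne_zero] with t ⟨h0, h3⟩
      rw [hw₃]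
      field_simp
      ring
  exact ⟨hz₁, hw₁, hz'.deriv, hw'.deriv⟩
end
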